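/- Let (X,T) be a simple, properly ordered Bratteli-Vershik system and suppose that the distinct paths x and x' are k-equivalent for some k >= 1. Then: (a) for every n > k the pair x, x' has an n cut; (b) there exists j >= k such that x, x' is a depth j pair; consequently (c) if two distinct k-equivalent paths form a depth n pair with n >= k, then they have an (n+1) cut. -/
import Mathlib


set_option autoImplicit false

/-- An ordered Bratteli diagram: finite nonempty vertex sets `V n`, a single root
vertex at level `0`, finite edge sets `E n` (edges from level `n` to level `n+1`,
multiple edges allowed), every vertex has an outgoing edge, every non-root vertex
an incoming edge, and the edges into each vertex carry a linear order, encoded by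
the relation `elt` which relates only edges with the same target. -/
structure BDiagram where
  V : ℕ → Type
  E : ℕ → Type
  fintV : ∀ n, Fintype (V n)
  fintE : ∀ n, Fintype (E n)
  nonV : ∀ n, Nonempty (V n)
  rootSubsingleton : Subsingleton (V 0)
  src : ∀ {n}, E n → V n
  tgt : ∀ {n}, E n → V (n + 1)
  hasOut : ∀ (n : ℕ) (v : V n), ∃ e : E n, src e = v
  hasIn : ∀ (n : ℕ) (v : V (n + 1)), ∃ e : E n, tgt e = v
  elt : ∀ {n}, E n → E n → Prop
  elt_tgt : ∀ (n : ℕ) (e f : E n), elt e f → tgt e = tgt f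
  elt_irrefl : ∀ (n : ℕ) (e : E n), ¬ elt e e
  elt_trans : ∀ (n : ℕ) (e f g : E n), elt e f → elt f g → elt e g
  elt_total : ∀ (n : ℕ) (e f : E n), tgt e = tgt f → e ≠ f → elt e f ∨ elt f e

namespace BDiagram

variable (B : BDiagram)

def castV {m n : ℕ} (h : m = n) (v : B.V m) : B.V n := h ▸ v

/-- An edge is minimal if no edge (into the same target) is below it. -/
def IsMinEdge {n : ℕ} (e : B.E n) : Prop := ∀ e' : B.E n, ¬ B.elt e' e

/-- An edge is maximal if no edge (into the same target) is above it. -/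
def IsMaxEdge {n : ℕ} (e : B.E n) : Prop := ∀ e' : B.E n, ¬ B.elt e e'

/-- The space of infinite paths from the root. -/
def PathSpace : Type := { x : ∀ n, B.E n // ∀ n, B.tgt (x n) = B.src (x (n + 1)) }

def IsMinPath (x : B.PathSpace) : Prop := ∀ n, B.IsMinEdge (x.1 n)

def IsMaxPath (x : B.PathSpace) : Prop := ∀ n, B.IsMaxEdge (x.1 n)

/-- Properly ordered: unique minimal and unique maximal path. -/
def ProperlyOrdered : Prop :=
  (∃! x : B.PathSpace, B.IsMinPath x) ∧ (∃! x : B.PathSpace, B.IsMaxPath x)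

/-- The partial order on cofinal paths: `x < y` iff they eventually agree and at the
last disagreement the edge of `x` is below the edge of `y`. -/
def pathLT (x y : B.PathSpace) : Prop :=
  ∃ N : ℕ, B.elt (x.1 N) (y.1 N) ∧ ∀ n : ℕ, N < n → x.1 n = y.1 n

/-- `T` is the Vershik map: each non-maximal path goes to its successor, and each
maximal path goes to a minimal path. -/
def IsVershik (T : B.PathSpace ≃ B.PathSpace) : Prop :=
  (∀ x : B.PathSpace, ¬ B.IsMaxPath x →
    B.pathLT x (T x) ∧ ∀ z : B.PathSpace, B.pathLT x z → ¬ B.pathLT z (T x)) ∧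
  (∀ x : B.PathSpace, B.IsMaxPath x → B.IsMinPath (T x))

/-- `f` is a chain of consecutive edges on levels `[a, b)`. -/
def SegOn (f : ∀ i, B.E i) (a b : ℕ) : Prop :=
  ∀ i : ℕ, a ≤ i → i + 1 < b → B.tgt (f i) = B.src (f (i + 1))

/-- Simplicity: some telescoping has complete connections between adjacent levels. -/
def Simple : Prop :=
  ∃ ns : ℕ → ℕ, StrictMono ns ∧ ns 0 = 0 ∧
    ∀ (l c : ℕ), ns (l + 1) = c + 1 →
      ∀ (v : B.V (ns l)) (w : B.V (c + 1)),
        ∃ f : ∀ i, B.E i, B.SegOn f (ns l) (c + 1) ∧ B.src (f (ns l)) = v ∧ B.tgt (f c) = w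

/-- The natural (Cantor) topology on the path space, induced from the product of
the discrete topologies on the edge sets. -/
def pathTop : TopologicalSpace B.PathSpace :=
  TopologicalSpace.induced Subtype.val (@Pi.topologicalSpace ℕ B.E (fun _ => ⊥))

/-- Integer iterates of a bijection of the path space. -/
def iterZ (T : B.PathSpace ≃ B.PathSpace) (m : ℤ) : B.PathSpace ≃ B.PathSpace :=
  (T : Equiv.Perm B.PathSpace) ^ m

/-- Two paths have the same `k`-coding: for every time `m` the initial segments of
`T^m x` and `T^m y` from the root to level `k` coincide. -/
def SameCoding (T : B.PathSpace ≃ B.PathSpace) (k : ℕ) (x y : B.PathSpace) : Prop :=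
  ∀ (m : ℤ) (i : ℕ), i < k → ((B.iterZ T m) x).1 i = ((B.iterZ T m) y).1 i

/-- A depth `k` pair: distinct paths with the same `k`-coding but not the same
`(k+1)`-coding. -/
def DepthPair (T : B.PathSpace ≃ B.PathSpace) (k : ℕ) (x y : B.PathSpace) : Prop :=
  x ≠ y ∧ B.SameCoding T k x y ∧ ¬ B.SameCoding T (k + 1) x y

/-- The pair `x, y` has a `j` cut: for some time `m`, both `T^m x` and `T^m y` are
minimal from the root into level `j`. -/
def HasCut (T : B.PathSpace ≃ B.PathSpace) (j : ℕ) (x y : B.PathSpace) : Prop :=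
  ∃ m : ℤ, (∀ i : ℕ, i < j → B.IsMinEdge (((B.iterZ T m) x).1 i)) ∧
    (∀ i : ℕ, i < j → B.IsMinEdge (((B.iterZ T m) y).1 i))

/-- Nonexpansive: for every `k ≥ 1` there are two distinct paths with the same
`k`-coding. -/
def Nonexpansive (T : B.PathSpace ≃ B.PathSpace) : Prop :=
  ∀ k : ℕ, 1 ≤ k → ∃ x y : B.PathSpace, x ≠ y ∧ B.SameCoding T k x y

/-- Well timed: for every `k ≥ 1` and every `j > k` there is a depth `k` pair with
a `j` cut. -/
def WellTimed (T : B.PathSpace ≃ B.PathSpace) : Prop :=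
  ∀ k : ℕ, 1 ≤ k → ∀ j : ℕ, k < j →
    ∃ x y : B.PathSpace, B.DepthPair T k x y ∧ B.HasCut T j x y

/-- Very well timed: for every `k ≥ 1` there is a depth `k` pair having a `j` cut
for every `j > k`. -/
def VeryWellTimed (T : B.PathSpace ≃ B.PathSpace) : Prop :=
  ∀ k : ℕ, 1 ≤ k →
    ∃ x y : B.PathSpace, B.DepthPair T k x y ∧ ∀ j : ℕ, k < j → B.HasCut T j x y

/-- Weakly well timed: for infinitely many `k ≥ 1`, for every `j > k` there is a
depth `k` pair with a `j` cut. -/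
def WeaklyWellTimed (T : B.PathSpace ≃ B.PathSpace) : Prop :=
  ∀ K : ℕ, ∃ k : ℕ, K ≤ k ∧ 1 ≤ k ∧ ∀ j : ℕ, k < j →
    ∃ x y : B.PathSpace, B.DepthPair T k x y ∧ B.HasCut T j x y

/-- Untimed: for every `k ≥ 1` there is a `j > k` such that no depth `k` pair has a
`j` cut. -/
def Untimed (T : B.PathSpace ≃ B.PathSpace) : Prop :=
  ∀ k : ℕ, 1 ≤ k → ∃ j : ℕ, k < j ∧
    ∀ x y : B.PathSpace, B.DepthPair T k x y → ¬ B.HasCut T j x y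

/-- Very untimed: for every `k ≥ 1`, no depth `k` pair has a `(k+1)` cut. -/
def VeryUntimed (T : B.PathSpace ≃ B.PathSpace) : Prop :=
  ∀ k : ℕ, 1 ≤ k →
    ∀ x y : B.PathSpace, B.DepthPair T k x y → ¬ B.HasCut T (k + 1) x y

/-- Finite paths from the root to level `n`. -/
def FinPath (n : ℕ) : Type :=
  { f : (i : Fin n) → B.E i.val //
    ∀ (i : ℕ) (h : i + 1 < n), B.tgt (f ⟨i, by omega⟩) = B.src (f ⟨i + 1, h⟩) }

/-- The lexicographic (from the end) order on finite paths to level `n` induced by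
the orders on the edges. -/
def finLT {n : ℕ} (p q : B.FinPath n) : Prop :=
  ∃ (N : ℕ) (h : N < n), B.elt (p.1 ⟨N, h⟩) (q.1 ⟨N, h⟩) ∧
    ∀ (i : ℕ) (hi : i < n), N < i → p.1 ⟨i, hi⟩ = q.1 ⟨i, hi⟩

/-- The finite path `p` to level `n` ends at the vertex `v`. -/
def EndsAt {n : ℕ} (p : B.FinPath n) (v : B.V n) : Prop :=
  ∀ (m : ℕ) (h : n = m + 1), B.tgt (p.1 ⟨m, by omega⟩) = B.castV h v

/-- The initial segment of an infinite path, from the root to level `n`. -/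
def pathInit (x : B.PathSpace) (n : ℕ) : B.FinPath n :=
  ⟨fun i => x.1 i.val, fun i _ => x.2 i⟩

/-- The vertex of an infinite path at level `n`. -/
def pathVert (x : B.PathSpace) (n : ℕ) : B.V n := B.src (x.1 n)

theorem pathInit_endsAt (x : B.PathSpace) (n : ℕ) :
    B.EndsAt (B.pathInit x n) (B.pathVert x n) := by
  intro m h
  subst h
  exact x.2 m

/-- Truncation of a finite path to a lower level. -/
def truncTo {n : ℕ} (k : ℕ) (hk : k ≤ n) (p : B.FinPath n) : B.FinPath k :=
  ⟨fun i => p.1 ⟨i.val, by omega⟩, fun i h => p.2 i (by omega)⟩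

/-- Paths `x, x'` are `k`-equivalent at level `n`: there is an order isomorphism
between the sets of finite paths from the root into their level-`n` vertices which
preserves truncations to level `k` (equality of `k`-basic blocks) and which matches
the initial segment of `x` with the initial segment of `x'` (the "dot" is in the
same place). -/
def KEquivAt (k n : ℕ) (x x' : B.PathSpace) : Prop :=
  ∃ φ : { p : B.FinPath n // B.EndsAt p (B.pathVert x n) } ≃
      { p : B.FinPath n // B.EndsAt p (B.pathVert x' n) },
    (∀ p q, B.finLT p.1 q.1 ↔ B.finLT (φ p).1 (φ q).1) ∧
    (∀ p (i : ℕ) (hik : i < k) (hin : i < n), ((φ p).1).1 ⟨i, hin⟩ = (p.1).1 ⟨i, hin⟩) ∧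
    φ ⟨B.pathInit x n, B.pathInit_endsAt x n⟩ = ⟨B.pathInit x' n, B.pathInit_endsAt x' n⟩

/-- Paths are `k`-equivalent: they agree from the root to level `k` and are
`k`-equivalent at every level `n > k`. -/
def KEquivPaths (k : ℕ) (x x' : B.PathSpace) : Prop :=
  (∀ i : ℕ, i < k → x.1 i = x'.1 i) ∧ ∀ n : ℕ, k < n → B.KEquivAt k n x x'

/-- Standard nonexpansive: for every `k ≥ 1` there is a pair of distinct
`k`-equivalent paths. -/
def SNE : Prop := ∀ k : ℕ, 1 ≤ k → ∃ x x' : B.PathSpace, x ≠ x' ∧ B.KEquivPaths k x x'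

/-!  ### Telescoping  -/

theorem castV_eq_of_heq {m n : ℕ} (h : m = n) {v : B.V m} {w : B.V n} (hw : HEq v w) :
    B.castV h v = w := by
  subst h
  exact eq_of_heq hw

theorem castV_heq {m n : ℕ} (h : m = n) (v : B.V m) : HEq (B.castV h v) v := by
  subst h
  rfl

theorem castV_inj {m n : ℕ} (h : m = n) {v w : B.V m}
    (hvw : B.castV h v = B.castV h w) : v = w := by
  subst h
  exact hvw

def castE {m n : ℕ} (h : m = n) (e : B.E m) : B.E n := h ▸ e

noncomputable def chainFrom (a : ℕ) (v : B.V a) : (i : ℕ) → B.E (a + i)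
  | 0 => (B.hasOut a v).choose
  | i + 1 => (B.hasOut (a + i + 1) (B.tgt (chainFrom a v i))).choose

theorem chainFrom_src_zero (a : ℕ) (v : B.V a) : B.src (B.chainFrom a v 0) = v :=
  (B.hasOut a v).choose_spec

theorem chainFrom_src_succ (a : ℕ) (v : B.V a) (i : ℕ) :
    B.src (B.chainFrom a v (i + 1)) = B.tgt (B.chainFrom a v i) :=
  (B.hasOut (a + i + 1) (B.tgt (B.chainFrom a v i))).choose_spec

noncomputable def chainTo (a : ℕ) : (j : ℕ) → (w : B.V (a + j + 1)) → (i : ℕ) → i ≤ j → B.E (a + i)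
  | 0, w, i, _ => B.castE (by omega : a + 0 = a + i) (B.hasIn a w).choose
  | j + 1, w, i, _ =>
      if h : i ≤ j then chainTo a j (B.src (B.hasIn (a + j + 1) w).choose) i h
      else B.castE (by omega : a + (j + 1) = a + i) (B.hasIn (a + j + 1) w).choose

theorem chainTo_tgt_last (a : ℕ) : ∀ (j : ℕ) (w : B.V (a + j + 1)),
    B.tgt (B.chainTo a j w j le_rfl) = w := by
  intro j w
  cases j with
  | zero =>
      simp only [chainTo]
      exact (B.hasIn a w).choose_spec
  | succ j =>
      simp only [chainTo]
      rw [dif_neg (by omega : ¬ j + 1 ≤ j)]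
      exact (B.hasIn (a + j + 1) w).choose_spec

theorem chainTo_chain (a : ℕ) : ∀ (j : ℕ) (w : B.V (a + j + 1)) (i : ℕ) (h : i + 1 ≤ j)
    (h' : i ≤ j), B.tgt (B.chainTo a j w i h') = B.src (B.chainTo a j w (i + 1) h) := by
  intro j
  induction j with
  | zero => intro w i h h'; omega
  | succ j ih =>
      intro w i h h'
      by_cases hij : i + 1 ≤ j
      · simp only [chainTo]
        rw [dif_pos (by omega : i ≤ j), dif_pos hij]
        exact ih _ i hij (by omega)
      · have hi : i = j := by omega
        subst hi
        simp only [chainTo]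
        rw [dif_pos (le_refl i), dif_neg (by omega : ¬ i + 1 ≤ i)]
        exact B.chainTo_tgt_last a i _


def TelE (a b : ℕ) : Type :=
  { f : (i : Fin (b - a)) → B.E (a + i.val) //
    ∀ (i : ℕ) (h : i + 1 < b - a), B.tgt (f ⟨i, by omega⟩) = B.src (f ⟨i + 1, h⟩) }

def telSrc {a b : ℕ} (hab : a < b) (f : B.TelE a b) : B.V a :=
  B.src (f.1 ⟨0, by omega⟩)

def telTgt {a b : ℕ} (hab : a < b) (f : B.TelE a b) : B.V b :=
  B.castV (by omega : a + (b - a - 1) + 1 = b) (B.tgt (f.1 ⟨b - a - 1, by omega⟩))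

def telLT {a b : ℕ} (f g : B.TelE a b) : Prop :=
  ∃ (N : ℕ) (h : N < b - a), B.elt (f.1 ⟨N, h⟩) (g.1 ⟨N, h⟩) ∧
    ∀ (i : ℕ) (hi : i < b - a), N < i → f.1 ⟨i, hi⟩ = g.1 ⟨i, hi⟩

noncomputable def Telescope (ns : ℕ → ℕ) (hmono : StrictMono ns) (h0 : ns 0 = 0) : BDiagram where
  V l := B.V (ns l)
  E l := B.TelE (ns l) (ns (l + 1))
  fintV l := B.fintV (ns l)
  fintE l := by
    classical
    letI : ∀ i : Fin (ns (l + 1) - ns l), Fintype (B.E (ns l + i.val)) := fun i => B.fintE _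
    exact Subtype.fintype _
  nonV l := B.nonV (ns l)
  rootSubsingleton := by show Subsingleton (B.V (ns 0)); rw [h0]; exact B.rootSubsingleton
  src {l} f := B.telSrc (hmono (Nat.lt_succ_self l)) f
  tgt {l} f := B.telTgt (hmono (Nat.lt_succ_self l)) f
  hasOut := by
    intro l v
    refine ⟨⟨fun i => B.chainFrom (ns l) v i.val,
      fun i h => (B.chainFrom_src_succ (ns l) v i).symm⟩, ?_⟩
    exact B.chainFrom_src_zero (ns l) v
  hasIn := by
    intro l w
    have hab : ns l < ns (l + 1) := hmono (Nat.lt_succ_self l)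
    have hj : ns l + (ns (l + 1) - ns l - 1) + 1 = ns (l + 1) := by omega
    refine ⟨⟨fun i => B.chainTo (ns l) (ns (l + 1) - ns l - 1) (B.castV hj.symm w) i.val
        (by omega), fun i h => B.chainTo_chain _ _ _ i (by omega) (by omega)⟩, ?_⟩
    show B.castV (by omega) (B.tgt (B.chainTo (ns l) (ns (l + 1) - ns l - 1)
      (B.castV hj.symm w) (ns (l + 1) - ns l - 1) (by omega))) = w
    rw [B.chainTo_tgt_last]
    exact B.castV_eq_of_heq _ (B.castV_heq _ w)
  elt {l} f g := B.telLT f g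
  elt_tgt := by
    rintro l f g ⟨N, hN, hlt, hgt⟩
    show B.telTgt _ f = B.telTgt _ g
    unfold telTgt
    refine congrArg (B.castV _) ?_
    rcases eq_or_lt_of_le (show N ≤ ns (l + 1) - ns l - 1 by omega) with h | h
    · subst h
      exact B.elt_tgt _ _ _ hlt
    · exact congrArg B.tgt (hgt _ (by omega) h)
  elt_irrefl := by
    rintro l f ⟨N, h, hlt, -⟩
    exact B.elt_irrefl _ _ hlt
  elt_trans := by
    rintro l f g h ⟨N₁, hN₁, hlt₁, hgt₁⟩ ⟨N₂, hN₂, hlt₂, hgt₂⟩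
    rcases lt_trichotomy N₁ N₂ with hc | hc | hc
    · exact ⟨N₂, hN₂, by rw [hgt₁ N₂ hN₂ hc]; exact hlt₂,
        fun i hi hN => (hgt₁ i hi (by omega)).trans (hgt₂ i hi hN)⟩
    · subst hc
      exact ⟨N₁, hN₁, B.elt_trans _ _ _ _ hlt₁ hlt₂,
        fun i hi hN => (hgt₁ i hi hN).trans (hgt₂ i hi hN)⟩
    · refine ⟨N₁, hN₁, ?_, fun i hi hN => (hgt₁ i hi hN).trans (hgt₂ i hi (by omega))⟩
      rw [← hgt₂ N₁ hN₁ hc]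
      exact hlt₁
  elt_total := by
    intro l f g htgt hne
    classical
    have hab : ns l < ns (l + 1) := hmono (Nat.lt_succ_self l)
    set b := ns (l + 1) - ns l with hb
    have hex : ∃ N, ∃ h : N < b, f.1 ⟨N, h⟩ ≠ g.1 ⟨N, h⟩ := by
      by_contra hco
      push_neg at hco
      exact hne (Subtype.ext (funext fun i => hco i.val i.isLt))
    set P : ℕ → Prop := fun N => ∃ h : N < b, f.1 ⟨N, h⟩ ≠ g.1 ⟨N, h⟩ with hP
    obtain ⟨N₀, hN₀⟩ := hex
    set N := Nat.findGreatest P b with hNdef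
    have hPN : P N := Nat.findGreatest_spec (le_of_lt hN₀.choose) hN₀
    have hafter : ∀ i (hi : i < b), N < i → f.1 ⟨i, hi⟩ = g.1 ⟨i, hi⟩ := by
      intro i hi hNi
      by_contra hcon
      exact Nat.findGreatest_is_greatest hNi (le_of_lt hi) ⟨hi, hcon⟩
    clear_value N
    obtain ⟨hNb, hNne⟩ := hPN
    have htgtN : B.tgt (f.1 ⟨N, hNb⟩) = B.tgt (g.1 ⟨N, hNb⟩) := by
      rcases eq_or_lt_of_le (show N ≤ b - 1 by omega) with h | h
      · -- N is the last index; use equality of targets of the composite edges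
        subst h
        exact B.castV_inj _ htgt
      · have h2 : f.1 ⟨N + 1, by omega⟩ = g.1 ⟨N + 1, by omega⟩ :=
          hafter (N + 1) (by omega) (by omega)
        rw [f.2 N (by omega), g.2 N (by omega), h2]
    rcases B.elt_total _ _ _ htgtN hNne with h | h
    · exact Or.inl ⟨N, hNb, h, hafter⟩
    · exact Or.inr ⟨N, hNb, h, fun i hi hN => (hafter i hi hN).symm⟩

def teleMap (ns : ℕ → ℕ) (hmono : StrictMono ns) (h0 : ns 0 = 0) (x : B.PathSpace) :
    (B.Telescope ns hmono h0).PathSpace :=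
  ⟨fun l => ⟨fun i => x.1 (ns l + i.val), fun i _ => x.2 (ns l + i)⟩, fun l => by
    have hab : ns l < ns (l + 1) := hmono (Nat.lt_succ_self l)
    have hm : ns l + (ns (l + 1) - ns l - 1) + 1 = ns (l + 1) := by omega
    show B.castV _ (B.tgt (x.1 (ns l + (ns (l + 1) - ns l - 1)))) = B.src (x.1 (ns (l + 1) + 0))
    rw [x.2 (ns l + (ns (l + 1) - ns l - 1))]
    exact B.castV_eq_of_heq _ (by rw [hm]; exact HEq.rfl)⟩


/-- Level `n+1` is uniformly ordered: there is a single nonempty block `P` of paths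
from the root to level `n` such that the `n`-basic block at every vertex at level
`n+1` is a positive power of `P`. -/
def UniformlyOrderedLevel (n : ℕ) : Prop :=
  ∃ (p : ℕ) (hp : 0 < p) (P : Fin p → B.FinPath n),
    ∀ v : B.V (n + 1), ∃ (m : ℕ), 0 < m ∧
      ∃ enum : Fin (m * p) ≃ { q : B.FinPath (n + 1) // B.EndsAt q v },
        (∀ i j : Fin (m * p), i < j ↔ B.finLT (enum i).1 (enum j).1) ∧
        (∀ i : Fin (m * p),
          B.truncTo n (Nat.le_succ n) (enum i).1 = P ⟨i.val % p, Nat.mod_lt _ hp⟩)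

/-- The ordinal label of an edge: its position in the linear order on the edges
into its target. -/
noncomputable def edgeLabel {n : ℕ} (e : B.E n) : ℕ := Nat.card { e' : B.E n // B.elt e' e }

/-- Deterministic: for every `n ≥ 1`, distinct edges with the same source at level
`n` have different ordinal labels. -/
def Deterministic : Prop :=
  ∀ n : ℕ, 1 ≤ n → ∀ e f : B.E n, B.src e = B.src f → e ≠ f →
    B.edgeLabel e ≠ B.edgeLabel f

end BDiagram

/-- A Bratteli–Vershik system: a simple, properly ordered ordered Bratteli diagram
together with its Vershik map. -/
structure BVSystem where
  B : BDiagram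
  T : B.PathSpace ≃ B.PathSpace
  proper : B.ProperlyOrdered
  simple : B.Simple
  vershik : B.IsVershik T

/-- Conjugacy of systems: an equivariant homeomorphism of the path spaces taking
minimal paths to minimal paths. -/
def Conjugate (S S' : BVSystem) : Prop :=
  ∃ φ : S.B.PathSpace ≃ S'.B.PathSpace,
    (@Continuous _ _ S.B.pathTop S'.B.pathTop φ) ∧
    (@Continuous _ _ S'.B.pathTop S.B.pathTop φ.symm) ∧
    (∀ x, φ (S.T x) = S'.T (φ x)) ∧
    (∀ x, S.B.IsMinPath x → S'.B.IsMinPath (φ x))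

/-- An odometer: a system whose diagram has exactly one vertex at every level. -/
def IsOdometer (S : BVSystem) : Prop := ∀ n, Subsingleton (S.B.V n)


section Aux

namespace BDiagram

variable (B : BDiagram)

theorem finite_finPath (n : ℕ) : Finite (B.FinPath n) := by
  letI : ∀ i : Fin n, Fintype (B.E i.val) := fun i => B.fintE _
  exact Subtype.finite

theorem finLT_irrefl {n : ℕ} (p : B.FinPath n) : ¬ B.finLT p p := by
  rintro ⟨N, h, hlt, -⟩
  exact B.elt_irrefl _ _ hlt

theorem finLT_trans {n : ℕ} {p q r : B.FinPath n} (h1 : B.finLT p q) (h2 : B.finLT q r) :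
    B.finLT p r := by
  obtain ⟨N₁, hN₁, hlt₁, hgt₁⟩ := h1
  obtain ⟨N₂, hN₂, hlt₂, hgt₂⟩ := h2
  rcases lt_trichotomy N₁ N₂ with hc | hc | hc
  · exact ⟨N₂, hN₂, by rw [hgt₁ N₂ hN₂ hc]; exact hlt₂,
      fun i hi hN => (hgt₁ i hi (by omega)).trans (hgt₂ i hi hN)⟩
  · subst hc
    exact ⟨N₁, hN₁, B.elt_trans _ _ _ _ hlt₁ hlt₂,
      fun i hi hN => (hgt₁ i hi hN).trans (hgt₂ i hi hN)⟩
  · refine ⟨N₁, hN₁, ?_, fun i hi hN => (hgt₁ i hi hN).trans (hgt₂ i hi (by omega))⟩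
    rw [← hgt₂ N₁ hN₁ hc]
    exact hlt₁

theorem finLT_total {n : ℕ} {v : B.V n} {p q : B.FinPath n}
    (hp : B.EndsAt p v) (hq : B.EndsAt q v) (hne : p ≠ q) :
    B.finLT p q ∨ B.finLT q p := by
  classical
  have hex : ∃ N, ∃ h : N < n, p.1 ⟨N, h⟩ ≠ q.1 ⟨N, h⟩ := by
    by_contra hco
    push_neg at hco
    exact hne (Subtype.ext (funext fun i => hco i.val i.isLt))
  set P : ℕ → Prop := fun N => ∃ h : N < n, p.1 ⟨N, h⟩ ≠ q.1 ⟨N, h⟩ with hP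
  obtain ⟨N₀, hN₀⟩ := hex
  set N := Nat.findGreatest P n with hNdef
  have hPN : P N := Nat.findGreatest_spec (le_of_lt hN₀.choose) hN₀
  have hafter : ∀ i (hi : i < n), N < i → p.1 ⟨i, hi⟩ = q.1 ⟨i, hi⟩ := by
    intro i hi hNi
    by_contra hcon
    exact Nat.findGreatest_is_greatest hNi (le_of_lt hi) ⟨hi, hcon⟩
  clear_value N
  obtain ⟨hNn, hNne⟩ := hPN
  have htgtN : B.tgt (p.1 ⟨N, hNn⟩) = B.tgt (q.1 ⟨N, hNn⟩) := by
    by_cases h : N + 1 < n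
    · have h2 : p.1 ⟨N + 1, h⟩ = q.1 ⟨N + 1, h⟩ := hafter (N + 1) h (by omega)
      rw [p.2 N h, q.2 N h, h2]
    · have hn : n = N + 1 := by omega
      rw [hp N hn, hq N hn]
  rcases B.elt_total _ _ _ htgtN hNne with h | h
  · exact Or.inl ⟨N, hNn, h, hafter⟩
  · exact Or.inr ⟨N, hNn, h, fun i hi hN => (hafter i hi hN).symm⟩

theorem src_castE {m n : ℕ} (h : m = n) (e : B.E m) :
    B.src (B.castE h e) = B.castV h (B.src e) := by subst h; rfl

theorem tgt_castE {m n : ℕ} (h : m = n) (e : B.E m) :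
    B.tgt (B.castE h e) = B.castV (by omega : m + 1 = n + 1) (B.tgt e) := by subst h; rfl

theorem castE_rfl {n : ℕ} (h : n = n) (e : B.E n) : B.castE h e = e := rfl

theorem castV_rfl {n : ℕ} (h : n = n) (v : B.V n) : B.castV h v = v := rfl

/-- Append an edge to a finite path (the underlying function). -/
def snocFun {n : ℕ} (p : B.FinPath n) (e : B.E n) : (j : Fin (n + 1)) → B.E j.val :=
  fun j => if hj : j.val < n then p.1 ⟨j.val, hj⟩ else B.castE (by have := j.isLt; omega) e

theorem snocFun_lt {n : ℕ} (p : B.FinPath n) (e : B.E n) (j : ℕ) (hj : j < n)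
    (hj' : j < n + 1) : B.snocFun p e ⟨j, hj'⟩ = p.1 ⟨j, hj⟩ := dif_pos hj

theorem snocFun_last {n : ℕ} (p : B.FinPath n) (e : B.E n) (hj' : n < n + 1) :
    B.snocFun p e ⟨n, hj'⟩ = e := by
  show (if hj : n < n then p.1 ⟨n, hj⟩ else B.castE _ e) = e
  rw [dif_neg (lt_irrefl n)]
  exact B.castE_rfl _ e

/-- Append an edge to a finite path. -/
def snocFP {n : ℕ} (p : B.FinPath n) (e : B.E n) (hp : B.EndsAt p (B.src e)) :
    B.FinPath (n + 1) :=
  ⟨B.snocFun p e, by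
    intro i h
    by_cases h1 : i + 1 < n
    · rw [B.snocFun_lt p e i (by omega), B.snocFun_lt p e (i + 1) h1]
      exact p.2 i h1
    · have hn : n = i + 1 := by omega
      subst hn
      rw [B.snocFun_lt p e i (by omega), B.snocFun_last]
      exact hp i rfl⟩

theorem snocFP_endsAt {n : ℕ} (p : B.FinPath n) (e : B.E n) (hp : B.EndsAt p (B.src e)) :
    B.EndsAt (B.snocFP p e hp) (B.tgt e) := by
  intro m h
  have hm : m = n := by omega
  subst hm
  rw [show (B.snocFP p e hp).1 ⟨m, by omega⟩ = e from B.snocFun_last p e (by omega)]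
  rfl

theorem snocFP_lt {n : ℕ} (p : B.FinPath n) (e : B.E n) (hp : B.EndsAt p (B.src e))
    (j : ℕ) (hj : j < n) (hj' : j < n + 1) :
    (B.snocFP p e hp).1 ⟨j, hj'⟩ = p.1 ⟨j, hj⟩ := B.snocFun_lt p e j hj hj'

theorem snocFP_last {n : ℕ} (p : B.FinPath n) (e : B.E n) (hp : B.EndsAt p (B.src e))
    (hj' : n < n + 1) : (B.snocFP p e hp).1 ⟨n, hj'⟩ = e := B.snocFun_last p e hj'

theorem exists_finPath_endsAt : ∀ (n : ℕ) (v : B.V n), ∃ p : B.FinPath n, B.EndsAt p v := by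
  intro n
  induction n with
  | zero =>
      intro v
      exact ⟨⟨fun i => (Nat.not_lt_zero i.val i.isLt).elim, fun i h => by omega⟩,
        fun m h => by omega⟩
  | succ n ih =>
      intro v
      obtain ⟨e, he⟩ := B.hasIn n v
      obtain ⟨p, hp⟩ := ih (B.src e)
      exact ⟨B.snocFP p e hp, he ▸ B.snocFP_endsAt p e hp⟩


/-- Splice a finite path onto the tail of an infinite path. -/
def splice (x : B.PathSpace) (n : ℕ) (q : B.FinPath n) (hq : B.EndsAt q (B.pathVert x n)) :
    B.PathSpace :=
  ⟨fun i => if h : i < n then q.1 ⟨i, h⟩ else x.1 i, by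
    intro i
    dsimp only
    by_cases h1 : i + 1 < n
    · rw [dif_pos (by omega : i < n), dif_pos h1]
      exact q.2 i h1
    · by_cases h2 : i < n
      · have hn : n = i + 1 := by omega
        rw [dif_pos h2, dif_neg h1]
        have := hq i hn
        subst hn
        exact this
      · rw [dif_neg h2, dif_neg h1]
        exact x.2 i⟩

theorem splice_lt (x : B.PathSpace) (n : ℕ) (q : B.FinPath n)
    (hq : B.EndsAt q (B.pathVert x n)) (i : ℕ) (hi : i < n) :
    (B.splice x n q hq).1 i = q.1 ⟨i, hi⟩ := dif_pos hi

theorem splice_ge (x : B.PathSpace) (n : ℕ) (q : B.FinPath n)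
    (hq : B.EndsAt q (B.pathVert x n)) (i : ℕ) (hi : n ≤ i) :
    (B.splice x n q hq).1 i = x.1 i := dif_neg (by omega)

/-- Replace an edge of a finite path with another edge into the same vertex,
rebuilding the path below. -/
theorem replace_edge {n i : ℕ} (hi : i < n) (p : B.FinPath n) (e : B.E i)
    (he : B.tgt e = B.tgt (p.1 ⟨i, hi⟩)) :
    ∃ q : B.FinPath n, q.1 ⟨i, hi⟩ = e ∧
      (∀ (j : ℕ) (hj : j < n), i < j → q.1 ⟨j, hj⟩ = p.1 ⟨j, hj⟩) ∧
      ∀ v : B.V n, B.EndsAt p v → B.EndsAt q v := by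
  obtain ⟨r, hr⟩ := B.exists_finPath_endsAt i (B.src e)
  refine ⟨⟨fun j => if hj : j.val < i then r.1 ⟨j.val, hj⟩
      else if hj2 : j.val = i then B.castE hj2.symm e else p.1 j, ?_⟩, ?_, ?_, ?_⟩
  · intro i0 h
    dsimp only
    by_cases c1 : i0 + 1 < i
    · rw [dif_pos (by omega : i0 < i), dif_pos c1]
      exact r.2 i0 c1
    · by_cases c2 : i0 + 1 = i
      · rw [dif_pos (by omega : i0 < i), dif_neg (by omega : ¬ i0 + 1 < i),
          dif_pos c2, B.src_castE]
        exact hr i0 c2.symm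
      · by_cases c3 : i0 = i
        · subst c3
          rw [dif_neg (by omega), dif_pos rfl, dif_neg (by omega), dif_neg (by omega)]
          rw [B.castE_rfl, he]
          exact p.2 i0 h
        · rw [dif_neg (by omega), dif_neg (by omega), dif_neg (by omega), dif_neg (by omega)]
          exact p.2 i0 h
  · show (if hj : i < i then _ else if hj2 : i = i then B.castE _ e else _) = e
    rw [dif_neg (lt_irrefl i), dif_pos rfl]
    exact B.castE_rfl _ e
  · intro j hj hij
    show (if h : j < i then _ else if h2 : j = i then _ else p.1 ⟨j, hj⟩) = p.1 ⟨j, hj⟩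
    rw [dif_neg (by omega), dif_neg (by omega)]
  · intro v hv m h
    have hm : m + 1 = n := by omega
    by_cases c : m = i
    · subst c
      show B.tgt (if h : m < m then _ else if h2 : m = m then B.castE _ e else _) = _
      rw [dif_neg (lt_irrefl m), dif_pos rfl, B.castE_rfl, he]
      exact hv m h
    · show B.tgt (if h1 : m < i then _ else if h2 : m = i then _ else p.1 ⟨m, by omega⟩) = _
      rw [dif_neg (by omega), dif_neg c]
      exact hv m h

/-- If no path into `v` is `finLT`-below `p`, then every edge of `p` is minimal. -/
theorem allMin_of_no_lt {n : ℕ} {v : B.V n} {p : B.FinPath n} (hp : B.EndsAt p v)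
    (h : ∀ q : B.FinPath n, B.EndsAt q v → ¬ B.finLT q p) :
    ∀ (j : ℕ) (hj : j < n), B.IsMinEdge (p.1 ⟨j, hj⟩) := by
  intro j hj e' helt
  have he : B.tgt e' = B.tgt (p.1 ⟨j, hj⟩) := B.elt_tgt _ _ _ helt
  obtain ⟨q, hq1, hq2, hq3⟩ := B.replace_edge hj p e' he
  exact h q (hq3 v hp) ⟨j, hj, by rw [hq1]; exact helt, hq2⟩

/-- If no path into `v` is `finLT`-above `p`, then every edge of `p` is maximal. -/
theorem allMax_of_no_gt {n : ℕ} {v : B.V n} {p : B.FinPath n} (hp : B.EndsAt p v)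
    (h : ∀ q : B.FinPath n, B.EndsAt q v → ¬ B.finLT p q) :
    ∀ (j : ℕ) (hj : j < n), B.IsMaxEdge (p.1 ⟨j, hj⟩) := by
  intro j hj e' helt
  have he : B.tgt e' = B.tgt (p.1 ⟨j, hj⟩) := (B.elt_tgt _ _ _ helt).symm
  obtain ⟨q, hq1, hq2, hq3⟩ := B.replace_edge hj p e' he
  exact h q (hq3 v hp) ⟨j, hj, by rw [hq1]; exact helt, fun i hi hN => (hq2 i hi hN).symm⟩

theorem no_lt_of_allMin {n : ℕ} {p : B.FinPath n}
    (h : ∀ (j : ℕ) (hj : j < n), B.IsMinEdge (p.1 ⟨j, hj⟩)) (q : B.FinPath n) :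
    ¬ B.finLT q p := by
  rintro ⟨N, hN, hlt, -⟩
  exact h N hN _ hlt

theorem no_gt_of_allMax {n : ℕ} {p : B.FinPath n}
    (h : ∀ (j : ℕ) (hj : j < n), B.IsMaxEdge (p.1 ⟨j, hj⟩)) (q : B.FinPath n) :
    ¬ B.finLT p q := by
  rintro ⟨N, hN, hlt, -⟩
  exact h N hN _ hlt


variable (T : B.PathSpace ≃ B.PathSpace)

/-- Description of the successor of a non-maximal path. -/
theorem succ_desc (hT : B.IsVershik T) (x : B.PathSpace) (hx : ¬ B.IsMaxPath x) :
    ∃ N : ℕ, B.elt (x.1 N) ((T x).1 N) ∧ (∀ i, N < i → (T x).1 i = x.1 i) ∧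
      (∀ i, i < N → B.IsMaxEdge (x.1 i)) ∧ (∀ i, i < N → B.IsMinEdge ((T x).1 i)) := by
  obtain ⟨⟨N, hN1, hN2⟩, hmin⟩ := hT.1 x hx
  refine ⟨N, hN1, fun i hi => (hN2 i hi).symm, ?_, ?_⟩
  · intro i hi e helt
    have he : B.tgt e = B.tgt (x.1 i) := (B.elt_tgt _ _ _ helt).symm
    obtain ⟨q, hq1, hq2, hq3⟩ :=
      B.replace_edge (show i < i + 1 by omega) (B.pathInit x (i + 1)) e he
    have hq4 : B.EndsAt q (B.pathVert x (i + 1)) := hq3 _ (B.pathInit_endsAt x (i + 1))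
    refine hmin (B.splice x (i + 1) q hq4) ⟨i, ?_, fun j hj => ?_⟩ ⟨N, ?_, fun j hj => ?_⟩
    · rw [B.splice_lt x (i + 1) q hq4 i (by omega), hq1]
      exact helt
    · exact (B.splice_ge x (i + 1) q hq4 j (by omega)).symm
    · rw [B.splice_ge x (i + 1) q hq4 N (by omega)]
      exact hN1
    · rw [B.splice_ge x (i + 1) q hq4 j (by omega)]
      exact hN2 j (by omega)
  · intro i hi e helt
    have he : B.tgt e = B.tgt ((T x).1 i) := B.elt_tgt _ _ _ helt
    obtain ⟨q, hq1, hq2, hq3⟩ :=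
      B.replace_edge (show i < i + 1 by omega) (B.pathInit (T x) (i + 1)) e he
    have hq4 : B.EndsAt q (B.pathVert (T x) (i + 1)) := hq3 _ (B.pathInit_endsAt (T x) (i + 1))
    refine hmin (B.splice (T x) (i + 1) q hq4) ⟨N, ?_, fun j hj => ?_⟩ ⟨i, ?_, fun j hj => ?_⟩
    · rw [B.splice_ge (T x) (i + 1) q hq4 N (by omega)]
      exact hN1
    · rw [B.splice_ge (T x) (i + 1) q hq4 j (by omega)]
      exact hN2 j (by omega)
    · rw [B.splice_lt (T x) (i + 1) q hq4 i (by omega), hq1]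
      exact helt
    · exact B.splice_ge (T x) (i + 1) q hq4 j (by omega)

/-- The successor, seen at level `n`: if the initial segment of `x` to level `n` is
not maximal, then `T x` keeps the same vertex and tail at level `n`, and its initial
segment is the immediate `finLT`-successor. -/
theorem succ_at_level (hT : B.IsVershik T) (x : B.PathSpace) (n : ℕ) (q₀ : B.FinPath n)
    (hq₀ : B.EndsAt q₀ (B.pathVert x n)) (hgt : B.finLT (B.pathInit x n) q₀) :
    B.pathVert (T x) n = B.pathVert x n ∧ (∀ i, n ≤ i → (T x).1 i = x.1 i) ∧
    B.finLT (B.pathInit x n) (B.pathInit (T x) n) ∧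
    (∀ q : B.FinPath n, B.EndsAt q (B.pathVert x n) →
      B.finLT (B.pathInit x n) q → ¬ B.finLT q (B.pathInit (T x) n)) := by
  obtain ⟨M, hM, helt, -⟩ := hgt
  have hx : ¬ B.IsMaxPath x := fun h => h M (q₀.1 ⟨M, hM⟩) helt
  obtain ⟨N, hN1, hN2, hN3, hN4⟩ := B.succ_desc T hT x hx
  have hNn : N < n := by
    by_contra hc
    exact hN3 M (by omega) _ helt
  have htail : ∀ i, n ≤ i → (T x).1 i = x.1 i := fun i hi => hN2 i (by omega)
  have hvert : B.pathVert (T x) n = B.pathVert x n := by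
    show B.src ((T x).1 n) = B.src (x.1 n)
    rw [htail n le_rfl]
  refine ⟨hvert, htail, ⟨N, hNn, hN1, fun j hj hNj => (hN2 j hNj).symm⟩, ?_⟩
  rintro q hq hxq ⟨M', hM', helt', habove'⟩
  obtain ⟨M₂, hM₂, helt₂, habove₂⟩ := hxq
  refine (hT.1 x hx).2 (B.splice x n q hq) ⟨M₂, ?_, fun j hj => ?_⟩ ⟨M', ?_, fun j hj => ?_⟩
  · rw [B.splice_lt x n q hq M₂ hM₂]
    exact helt₂
  · by_cases hjn : j < n
    · rw [B.splice_lt x n q hq j hjn]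
      exact habove₂ j hjn hj
    · rw [B.splice_ge x n q hq j (by omega)]
  · rw [B.splice_lt x n q hq M' hM']
    exact helt'
  · by_cases hjn : j < n
    · rw [B.splice_lt x n q hq j hjn]
      exact habove' j hjn hj
    · rw [B.splice_ge x n q hq j (by omega)]
      exact (htail j (by omega)).symm

/-- The predecessor, seen at level `n`. -/
theorem pred_at_level (hT : B.IsVershik T) (x : B.PathSpace) (n : ℕ) (q₀ : B.FinPath n)
    (hq₀ : B.EndsAt q₀ (B.pathVert x n)) (hlt : B.finLT q₀ (B.pathInit x n)) :
    B.pathVert (T.symm x) n = B.pathVert x n ∧ (∀ i, n ≤ i → (T.symm x).1 i = x.1 i) ∧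
    B.finLT (B.pathInit (T.symm x) n) (B.pathInit x n) ∧
    (∀ q : B.FinPath n, B.EndsAt q (B.pathVert x n) →
      B.finLT (B.pathInit (T.symm x) n) q → ¬ B.finLT q (B.pathInit x n)) := by
  obtain ⟨M, hM, helt, -⟩ := hlt
  have hxmin : ¬ B.IsMinPath x := fun h => h M _ helt
  have hy : ¬ B.IsMaxPath (T.symm x) := by
    intro h
    have h2 := hT.2 _ h
    rw [T.apply_symm_apply] at h2
    exact hxmin h2
  obtain ⟨N, hN1, hN2, hN3, hN4⟩ := B.succ_desc T hT (T.symm x) hy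
  rw [T.apply_symm_apply] at hN1
  have hN2' : ∀ i, N < i → x.1 i = (T.symm x).1 i := by
    intro i hi
    have := hN2 i hi
    rw [T.apply_symm_apply] at this
    exact this
  have hN4' : ∀ i, i < N → B.IsMinEdge (x.1 i) := by
    intro i hi
    have := hN4 i hi
    rw [T.apply_symm_apply] at this
    exact this
  have hNn : N < n := by
    by_contra hc
    exact hN4' M (by omega) _ helt
  have htail : ∀ i, n ≤ i → (T.symm x).1 i = x.1 i := fun i hi => (hN2' i (by omega)).symm
  have hvert : B.pathVert (T.symm x) n = B.pathVert x n := by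
    show B.src ((T.symm x).1 n) = B.src (x.1 n)
    rw [htail n le_rfl]
  refine ⟨hvert, htail, ⟨N, hNn, hN1, fun j hj hNj => (hN2' j hNj).symm⟩, ?_⟩
  rintro q hq hyq ⟨M', hM', helt', habove'⟩
  obtain ⟨M₂, hM₂, helt₂, habove₂⟩ := hyq
  have hq' : B.EndsAt q (B.pathVert (T.symm x) n) := by rw [hvert]; exact hq
  have hz2 : B.pathLT (B.splice (T.symm x) n q hq') (T (T.symm x)) := by
    rw [T.apply_symm_apply]
    refine ⟨M', ?_, fun j hj => ?_⟩
    · rw [B.splice_lt (T.symm x) n q hq' M' hM']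
      exact helt'
    · by_cases hjn : j < n
      · rw [B.splice_lt (T.symm x) n q hq' j hjn]
        exact habove' j hjn hj
      · rw [B.splice_ge (T.symm x) n q hq' j (by omega)]
        exact htail j (by omega)
  refine (hT.1 (T.symm x) hy).2 (B.splice (T.symm x) n q hq') ⟨M₂, ?_, fun j hj => ?_⟩ hz2
  · rw [B.splice_lt (T.symm x) n q hq' M₂ hM₂]
    exact helt₂
  · by_cases hjn : j < n
    · rw [B.splice_lt (T.symm x) n q hq' j hjn]
      exact habove₂ j hjn hj
    · rw [B.splice_ge (T.symm x) n q hq' j (by omega)]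


theorem immsucc_unique {n : ℕ} {v : B.V n} {p s s' : B.FinPath n}
    (hs : B.EndsAt s v) (hs' : B.EndsAt s' v)
    (h1 : B.finLT p s) (h2 : ∀ q : B.FinPath n, B.EndsAt q v → B.finLT p q → ¬ B.finLT q s)
    (h1' : B.finLT p s')
    (h2' : ∀ q : B.FinPath n, B.EndsAt q v → B.finLT p q → ¬ B.finLT q s') : s = s' := by
  by_contra hne
  rcases B.finLT_total hs hs' hne with h | h
  · exact h2' s hs h1 h
  · exact h2 s' hs' h1' h

theorem immpred_unique {n : ℕ} {v : B.V n} {p s s' : B.FinPath n}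
    (hs : B.EndsAt s v) (hs' : B.EndsAt s' v)
    (h1 : B.finLT s p) (h2 : ∀ q : B.FinPath n, B.EndsAt q v → B.finLT s q → ¬ B.finLT q p)
    (h1' : B.finLT s' p)
    (h2' : ∀ q : B.FinPath n, B.EndsAt q v → B.finLT s' q → ¬ B.finLT q p) : s = s' := by
  by_contra hne
  rcases B.finLT_total hs hs' hne with h | h
  · exact h2 s' hs' h h1'
  · exact h2' s hs h h1

/-- `k`-equivalence at level `n` is preserved by the Vershik map, provided the
initial segment is not maximal. -/
theorem kequivAt_T (hT : B.IsVershik T) {k n : ℕ} {x x' : B.PathSpace}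
    (h : B.KEquivAt k n x x')
    (hnm : ∃ q : B.FinPath n, B.EndsAt q (B.pathVert x n) ∧ B.finLT (B.pathInit x n) q) :
    B.KEquivAt k n (T x) (T x') := by
  obtain ⟨φ, hord, htr, hdot⟩ := h
  obtain ⟨q₀, hq₀, hgt⟩ := hnm
  have hdot1 : (φ ⟨B.pathInit x n, B.pathInit_endsAt x n⟩).1 = B.pathInit x' n := by
    rw [hdot]
  obtain ⟨hvx, htailx, hsx, himmx⟩ := B.succ_at_level T hT x n q₀ hq₀ hgt
  have hgt' : B.finLT (B.pathInit x' n) (φ ⟨q₀, hq₀⟩).1 := by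
    rw [← hdot1]
    exact (hord _ _).mp hgt
  obtain ⟨hvx', htailx', hsx', himmx'⟩ :=
    B.succ_at_level T hT x' n (φ ⟨q₀, hq₀⟩).1 (φ ⟨q₀, hq₀⟩).2 hgt'
  have hE : B.EndsAt (B.pathInit (T x) n) (B.pathVert x n) := by
    rw [← hvx]; exact B.pathInit_endsAt (T x) n
  have hkey : (φ ⟨B.pathInit (T x) n, hE⟩).1 = B.pathInit (T x') n := by
    refine B.immsucc_unique (v := B.pathVert x' n) (p := B.pathInit x' n)
      (φ _).2 ?_ ?_ ?_ hsx' himmx'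
    · rw [← hvx']; exact B.pathInit_endsAt (T x') n
    · rw [← hdot1]; exact (hord _ _).mp hsx
    · intro q hq hpq hqs
      have hr1 : B.finLT (B.pathInit x n) (φ.symm ⟨q, hq⟩).1 := by
        refine (hord ⟨B.pathInit x n, B.pathInit_endsAt x n⟩ (φ.symm ⟨q, hq⟩)).mpr ?_
        rw [hdot1, Equiv.apply_symm_apply]
        exact hpq
      have hr2 : B.finLT (φ.symm ⟨q, hq⟩).1 (B.pathInit (T x) n) := by
        refine (hord (φ.symm ⟨q, hq⟩) ⟨B.pathInit (T x) n, hE⟩).mpr ?_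
        rw [Equiv.apply_symm_apply]
        exact hqs
      exact himmx _ (φ.symm ⟨q, hq⟩).2 hr1 hr2
  have hiff1 : ∀ p : B.FinPath n,
      B.EndsAt p (B.pathVert (T x) n) ↔ B.EndsAt p (B.pathVert x n) := fun p => by rw [hvx]
  have hiff2 : ∀ p : B.FinPath n,
      B.EndsAt p (B.pathVert x' n) ↔ B.EndsAt p (B.pathVert (T x') n) := fun p => by rw [hvx']
  refine ⟨(Equiv.subtypeEquivRight hiff1).trans (φ.trans (Equiv.subtypeEquivRight hiff2)),
    ?_, ?_, ?_⟩
  · intro p q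
    exact hord ⟨p.1, (hiff1 p.1).mp p.2⟩ ⟨q.1, (hiff1 q.1).mp q.2⟩
  · intro p i hik hin
    exact htr ⟨p.1, (hiff1 p.1).mp p.2⟩ i hik hin
  · exact Subtype.ext hkey

/-- `k`-equivalence at level `n` is preserved by the inverse Vershik map, provided
the initial segment is not minimal. -/
theorem kequivAt_Tsymm (hT : B.IsVershik T) {k n : ℕ} {x x' : B.PathSpace}
    (h : B.KEquivAt k n x x')
    (hnm : ∃ q : B.FinPath n, B.EndsAt q (B.pathVert x n) ∧ B.finLT q (B.pathInit x n)) :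
    B.KEquivAt k n (T.symm x) (T.symm x') := by
  obtain ⟨φ, hord, htr, hdot⟩ := h
  obtain ⟨q₀, hq₀, hlt⟩ := hnm
  have hdot1 : (φ ⟨B.pathInit x n, B.pathInit_endsAt x n⟩).1 = B.pathInit x' n := by
    rw [hdot]
  obtain ⟨hvx, htailx, hsx, himmx⟩ := B.pred_at_level T hT x n q₀ hq₀ hlt
  have hlt' : B.finLT (φ ⟨q₀, hq₀⟩).1 (B.pathInit x' n) := by
    rw [← hdot1]
    exact (hord _ _).mp hlt
  obtain ⟨hvx', htailx', hsx', himmx'⟩ :=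
    B.pred_at_level T hT x' n (φ ⟨q₀, hq₀⟩).1 (φ ⟨q₀, hq₀⟩).2 hlt'
  have hE : B.EndsAt (B.pathInit (T.symm x) n) (B.pathVert x n) := by
    rw [← hvx]; exact B.pathInit_endsAt (T.symm x) n
  have hkey : (φ ⟨B.pathInit (T.symm x) n, hE⟩).1 = B.pathInit (T.symm x') n := by
    refine B.immpred_unique (v := B.pathVert x' n) (p := B.pathInit x' n)
      (φ _).2 ?_ ?_ ?_ hsx' himmx'
    · rw [← hvx']; exact B.pathInit_endsAt (T.symm x') n
    · rw [← hdot1]; exact (hord _ _).mp hsx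
    · intro q hq hsq hqp
      have hr1 : B.finLT (B.pathInit (T.symm x) n) (φ.symm ⟨q, hq⟩).1 := by
        refine (hord ⟨B.pathInit (T.symm x) n, hE⟩ (φ.symm ⟨q, hq⟩)).mpr ?_
        rw [Equiv.apply_symm_apply]
        exact hsq
      have hr2 : B.finLT (φ.symm ⟨q, hq⟩).1 (B.pathInit x n) := by
        refine (hord (φ.symm ⟨q, hq⟩) ⟨B.pathInit x n, B.pathInit_endsAt x n⟩).mpr ?_
        rw [hdot1, Equiv.apply_symm_apply]
        exact hqp
      exact himmx _ (φ.symm ⟨q, hq⟩).2 hr1 hr2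
  have hiff1 : ∀ p : B.FinPath n,
      B.EndsAt p (B.pathVert (T.symm x) n) ↔ B.EndsAt p (B.pathVert x n) := fun p => by rw [hvx]
  have hiff2 : ∀ p : B.FinPath n,
      B.EndsAt p (B.pathVert x' n) ↔ B.EndsAt p (B.pathVert (T.symm x') n) :=
    fun p => by rw [hvx']
  refine ⟨(Equiv.subtypeEquivRight hiff1).trans (φ.trans (Equiv.subtypeEquivRight hiff2)),
    ?_, ?_, ?_⟩
  · intro p q
    exact hord ⟨p.1, (hiff1 p.1).mp p.2⟩ ⟨q.1, (hiff1 q.1).mp q.2⟩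
  · intro p i hik hin
    exact htr ⟨p.1, (hiff1 p.1).mp p.2⟩ i hik hin
  · exact Subtype.ext hkey


/-- Number of paths into the level-`n` vertex of `x` lying strictly below the
initial segment of `x`. -/
noncomputable def posN (n : ℕ) (x : B.PathSpace) : ℕ :=
  Set.ncard {q : B.FinPath n | B.EndsAt q (B.pathVert x n) ∧ B.finLT q (B.pathInit x n)}

/-- Number of paths into the level-`n` vertex of `x` lying strictly above the
initial segment of `x`. -/
noncomputable def coposN (n : ℕ) (x : B.PathSpace) : ℕ :=
  Set.ncard {q : B.FinPath n | B.EndsAt q (B.pathVert x n) ∧ B.finLT (B.pathInit x n) q}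

theorem posN_congr {k n : ℕ} {x x' : B.PathSpace} (h : B.KEquivAt k n x x') :
    B.posN n x = B.posN n x' := by
  haveI := B.finite_finPath n
  obtain ⟨φ, hord, htr, hdot⟩ := h
  have hdot1 : (φ ⟨B.pathInit x n, B.pathInit_endsAt x n⟩).1 = B.pathInit x' n := by
    rw [hdot]
  apply le_antisymm
  · rw [posN, posN, ← Nat.card_coe_set_eq, ← Nat.card_coe_set_eq]
    refine Nat.card_le_card_of_injective
      (fun q => ⟨(φ ⟨q.1, q.2.1⟩).1, (φ _).2, ?_⟩) ?_
    · rw [← hdot1]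
      exact (hord _ _).mp q.2.2
    · intro a b hab
      have h2 := congrArg Subtype.val hab
      dsimp only at h2
      have h4 := φ.injective (Subtype.ext h2)
      have h5 := Subtype.ext_iff.mp h4
      exact Subtype.ext h5
  · rw [posN, posN, ← Nat.card_coe_set_eq, ← Nat.card_coe_set_eq]
    refine Nat.card_le_card_of_injective
      (fun q => ⟨(φ.symm ⟨q.1, q.2.1⟩).1, (φ.symm _).2, ?_⟩) ?_
    · refine (hord (φ.symm ⟨q.1, q.2.1⟩) ⟨B.pathInit x n, B.pathInit_endsAt x n⟩).mpr ?_
      rw [hdot1, Equiv.apply_symm_apply]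
      exact q.2.2
    · intro a b hab
      have h2 := congrArg Subtype.val hab
      dsimp only at h2
      have h4 := φ.symm.injective (Subtype.ext h2)
      have h5 := Subtype.ext_iff.mp h4
      exact Subtype.ext h5

theorem coposN_congr {k n : ℕ} {x x' : B.PathSpace} (h : B.KEquivAt k n x x') :
    B.coposN n x = B.coposN n x' := by
  haveI := B.finite_finPath n
  obtain ⟨φ, hord, htr, hdot⟩ := h
  have hdot1 : (φ ⟨B.pathInit x n, B.pathInit_endsAt x n⟩).1 = B.pathInit x' n := by
    rw [hdot]
  apply le_antisymm
  · rw [coposN, coposN, ← Nat.card_coe_set_eq, ← Nat.card_coe_set_eq]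
    refine Nat.card_le_card_of_injective
      (fun q => ⟨(φ ⟨q.1, q.2.1⟩).1, (φ _).2, ?_⟩) ?_
    · rw [← hdot1]
      exact (hord _ _).mp q.2.2
    · intro a b hab
      have h2 := congrArg Subtype.val hab
      dsimp only at h2
      have h4 := φ.injective (Subtype.ext h2)
      have h5 := Subtype.ext_iff.mp h4
      exact Subtype.ext h5
  · rw [coposN, coposN, ← Nat.card_coe_set_eq, ← Nat.card_coe_set_eq]
    refine Nat.card_le_card_of_injective
      (fun q => ⟨(φ.symm ⟨q.1, q.2.1⟩).1, (φ.symm _).2, ?_⟩) ?_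
    · refine (hord ⟨B.pathInit x n, B.pathInit_endsAt x n⟩ (φ.symm ⟨q.1, q.2.1⟩)).mpr ?_
      rw [hdot1, Equiv.apply_symm_apply]
      exact q.2.2
    · intro a b hab
      have h2 := congrArg Subtype.val hab
      dsimp only at h2
      have h4 := φ.symm.injective (Subtype.ext h2)
      have h5 := Subtype.ext_iff.mp h4
      exact Subtype.ext h5

theorem posN_pred (hT : B.IsVershik T) {n : ℕ} {x : B.PathSpace}
    (hnm : ∃ q : B.FinPath n, B.EndsAt q (B.pathVert x n) ∧ B.finLT q (B.pathInit x n)) :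
    B.posN n x = B.posN n (T.symm x) + 1 := by
  haveI := B.finite_finPath n
  obtain ⟨q₀, hq₀, hlt⟩ := hnm
  obtain ⟨hvx, htail, hsx, himm⟩ := B.pred_at_level T hT x n q₀ hq₀ hlt
  have hEy : B.EndsAt (B.pathInit (T.symm x) n) (B.pathVert x n) := by
    rw [← hvx]; exact B.pathInit_endsAt (T.symm x) n
  have hset : {q : B.FinPath n | B.EndsAt q (B.pathVert x n) ∧ B.finLT q (B.pathInit x n)} =
      insert (B.pathInit (T.symm x) n)
        {q : B.FinPath n |
          B.EndsAt q (B.pathVert (T.symm x) n) ∧ B.finLT q (B.pathInit (T.symm x) n)} := by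
    ext q
    constructor
    · rintro ⟨hq1, hq2⟩
      by_cases hqe : q = B.pathInit (T.symm x) n
      · exact Or.inl hqe
      · rcases B.finLT_total hq1 hEy hqe with hc | hc
        · exact Or.inr ⟨by rw [hvx]; exact hq1, hc⟩
        · exact absurd hq2 (himm q hq1 hc)
    · rintro (rfl | ⟨hq1, hq2⟩)
      · exact ⟨hEy, hsx⟩
      · refine ⟨by rw [← hvx]; exact hq1, B.finLT_trans hq2 hsx⟩
  rw [posN, posN, hset]
  exact Set.ncard_insert_of_notMem (fun hmem => B.finLT_irrefl _ hmem.2) (Set.toFinite _)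

theorem coposN_succ (hT : B.IsVershik T) {n : ℕ} {x : B.PathSpace}
    (hnm : ∃ q : B.FinPath n, B.EndsAt q (B.pathVert x n) ∧ B.finLT (B.pathInit x n) q) :
    B.coposN n x = B.coposN n (T x) + 1 := by
  haveI := B.finite_finPath n
  obtain ⟨q₀, hq₀, hgt⟩ := hnm
  obtain ⟨hvx, htail, hsx, himm⟩ := B.succ_at_level T hT x n q₀ hq₀ hgt
  have hEy : B.EndsAt (B.pathInit (T x) n) (B.pathVert x n) := by
    rw [← hvx]; exact B.pathInit_endsAt (T x) n
  have hset : {q : B.FinPath n | B.EndsAt q (B.pathVert x n) ∧ B.finLT (B.pathInit x n) q} =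
      insert (B.pathInit (T x) n)
        {q : B.FinPath n |
          B.EndsAt q (B.pathVert (T x) n) ∧ B.finLT (B.pathInit (T x) n) q} := by
    ext q
    constructor
    · rintro ⟨hq1, hq2⟩
      by_cases hqe : q = B.pathInit (T x) n
      · exact Or.inl hqe
      · rcases B.finLT_total hEy hq1 (fun h => hqe h.symm) with hc | hc
        · exact Or.inr ⟨by rw [hvx]; exact hq1, hc⟩
        · exact absurd hc (himm q hq1 hq2)
    · rintro (rfl | ⟨hq1, hq2⟩)
      · exact ⟨hEy, hsx⟩
      · refine ⟨by rw [← hvx]; exact hq1, B.finLT_trans hsx hq2⟩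
  rw [coposN, coposN, hset]
  exact Set.ncard_insert_of_notMem (fun hmem => B.finLT_irrefl _ hmem.2) (Set.toFinite _)

theorem allMin_of_posN_zero {n : ℕ} {x : B.PathSpace} (h : B.posN n x = 0) :
    ∀ i, i < n → B.IsMinEdge (x.1 i) := by
  haveI := B.finite_finPath n
  have hempty : {q : B.FinPath n | B.EndsAt q (B.pathVert x n) ∧
      B.finLT q (B.pathInit x n)} = ∅ := (Set.ncard_eq_zero (Set.toFinite _)).mp h
  intro i hi
  exact B.allMin_of_no_lt (B.pathInit_endsAt x n)
    (fun q hq hlt => by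
      have : q ∈ ({} : Set (B.FinPath n)) := hempty ▸ (⟨hq, hlt⟩ :
        q ∈ {q : B.FinPath n | B.EndsAt q (B.pathVert x n) ∧ B.finLT q (B.pathInit x n)})
      exact this.elim) i hi

theorem allMax_of_coposN_zero {n : ℕ} {x : B.PathSpace} (h : B.coposN n x = 0) :
    ∀ i, i < n → B.IsMaxEdge (x.1 i) := by
  haveI := B.finite_finPath n
  have hempty : {q : B.FinPath n | B.EndsAt q (B.pathVert x n) ∧
      B.finLT (B.pathInit x n) q} = ∅ := (Set.ncard_eq_zero (Set.toFinite _)).mp h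
  intro i hi
  exact B.allMax_of_no_gt (B.pathInit_endsAt x n)
    (fun q hq hlt => by
      have : q ∈ ({} : Set (B.FinPath n)) := hempty ▸ (⟨hq, hlt⟩ :
        q ∈ {q : B.FinPath n | B.EndsAt q (B.pathVert x n) ∧ B.finLT (B.pathInit x n) q})
      exact this.elim) i hi

theorem exists_lt_of_posN_ne_zero {n : ℕ} {x : B.PathSpace} (h : B.posN n x ≠ 0) :
    ∃ q : B.FinPath n, B.EndsAt q (B.pathVert x n) ∧ B.finLT q (B.pathInit x n) :=
  Set.nonempty_of_ncard_ne_zero h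

theorem exists_gt_of_coposN_ne_zero {n : ℕ} {x : B.PathSpace} (h : B.coposN n x ≠ 0) :
    ∃ q : B.FinPath n, B.EndsAt q (B.pathVert x n) ∧ B.finLT (B.pathInit x n) q :=
  Set.nonempty_of_ncard_ne_zero h


theorem coposN_le_succ (n : ℕ) (x : B.PathSpace) : B.coposN n x ≤ B.coposN (n + 1) x := by
  haveI := B.finite_finPath (n + 1)
  rw [coposN, coposN, ← Nat.card_coe_set_eq, ← Nat.card_coe_set_eq]
  refine Nat.card_le_card_of_injective
    (fun q => ⟨B.snocFP q.1 (x.1 n) q.2.1, ?_, ?_⟩) ?_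
  · show B.EndsAt _ (B.src (x.1 (n + 1)))
    rw [← x.2 n]
    exact B.snocFP_endsAt q.1 (x.1 n) q.2.1
  · obtain ⟨M, hM, helt, hab⟩ := q.2.2
    refine ⟨M, by omega, ?_, ?_⟩
    · rw [B.snocFP_lt q.1 (x.1 n) q.2.1 M hM (by omega)]
      exact helt
    · intro j hj hMj
      by_cases hjn : j < n
      · rw [B.snocFP_lt q.1 (x.1 n) q.2.1 j hjn (by omega)]
        exact hab j hjn hMj
      · have hjn' : j = n := by omega
        subst hjn'
        rw [B.snocFP_last q.1 (x.1 j) q.2.1 (by omega)]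
        rfl
  · intro a b hab
    have h0 := congrArg Subtype.val hab
    dsimp only at h0
    have h1 : (B.snocFP a.1 (x.1 n) a.2.1).1 = (B.snocFP b.1 (x.1 n) b.2.1).1 :=
      congrArg Subtype.val h0
    refine Subtype.ext (Subtype.ext (funext fun i => ?_))
    have h2 := congrFun h1 ⟨i.1, by have := i.isLt; omega⟩
    rw [B.snocFP_lt a.1 (x.1 n) a.2.1 i.1 i.isLt (by have := i.isLt; omega),
        B.snocFP_lt b.1 (x.1 n) b.2.1 i.1 i.isLt (by have := i.isLt; omega)] at h2
    exact h2

theorem posN_le_succ (n : ℕ) (x : B.PathSpace) : B.posN n x ≤ B.posN (n + 1) x := by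
  haveI := B.finite_finPath (n + 1)
  rw [posN, posN, ← Nat.card_coe_set_eq, ← Nat.card_coe_set_eq]
  refine Nat.card_le_card_of_injective
    (fun q => ⟨B.snocFP q.1 (x.1 n) q.2.1, ?_, ?_⟩) ?_
  · show B.EndsAt _ (B.src (x.1 (n + 1)))
    rw [← x.2 n]
    exact B.snocFP_endsAt q.1 (x.1 n) q.2.1
  · obtain ⟨M, hM, helt, hab⟩ := q.2.2
    refine ⟨M, by omega, ?_, ?_⟩
    · rw [B.snocFP_lt q.1 (x.1 n) q.2.1 M hM (by omega)]
      exact helt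
    · intro j hj hMj
      by_cases hjn : j < n
      · rw [B.snocFP_lt q.1 (x.1 n) q.2.1 j hjn (by omega)]
        exact hab j hjn hMj
      · have hjn' : j = n := by omega
        subst hjn'
        rw [B.snocFP_last q.1 (x.1 j) q.2.1 (by omega)]
        rfl
  · intro a b hab
    have h0 := congrArg Subtype.val hab
    dsimp only at h0
    have h1 : (B.snocFP a.1 (x.1 n) a.2.1).1 = (B.snocFP b.1 (x.1 n) b.2.1).1 :=
      congrArg Subtype.val h0
    refine Subtype.ext (Subtype.ext (funext fun i => ?_))
    have h2 := congrFun h1 ⟨i.1, by have := i.isLt; omega⟩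
    rw [B.snocFP_lt a.1 (x.1 n) a.2.1 i.1 i.isLt (by have := i.isLt; omega),
        B.snocFP_lt b.1 (x.1 n) b.2.1 i.1 i.isLt (by have := i.isLt; omega)] at h2
    exact h2

theorem nat_stab (c : ℕ → ℕ) (k m : ℕ) (hmono : ∀ n, c n ≤ c (n + 1))
    (hbd : ∀ n, k < n → c n ≤ m) : ∃ n₀, k < n₀ ∧ ∀ n, n₀ ≤ n → c n = c n₀ := by
  classical
  have hmono' : Monotone c := monotone_nat_of_le_succ hmono
  set P : ℕ → Prop := fun v => ∃ n, k < n ∧ c n = v with hP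
  have h1 : P (c (k + 1)) := ⟨k + 1, by omega, rfl⟩
  have hV : P (Nat.findGreatest P m) := Nat.findGreatest_spec (hbd (k + 1) (by omega)) h1
  obtain ⟨n₀, hn₀, hc⟩ := hV
  refine ⟨n₀, hn₀, fun n hn => ?_⟩
  have hle : c n ≤ Nat.findGreatest P m := by
    by_contra hgt
    push_neg at hgt
    exact Nat.findGreatest_is_greatest hgt (hbd n (by omega)) ⟨n, by omega, rfl⟩
  have hge : c n₀ ≤ c n := hmono' hn
  omega

theorem iterZ_zero (x : B.PathSpace) : B.iterZ T 0 x = x := by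
  show ((T : Equiv.Perm B.PathSpace) ^ (0 : ℤ)) x = x
  rw [zpow_zero]
  rfl

theorem iterZ_succ (m : ℤ) (x : B.PathSpace) : B.iterZ T (m + 1) x = B.iterZ T m (T x) := by
  show ((T : Equiv.Perm B.PathSpace) ^ (m + 1)) x = ((T : Equiv.Perm B.PathSpace) ^ m) (T x)
  rw [zpow_add_one]
  rfl

theorem iterZ_pred (m : ℤ) (x : B.PathSpace) :
    B.iterZ T (m - 1) x = B.iterZ T m (T.symm x) := by
  show ((T : Equiv.Perm B.PathSpace) ^ (m - 1)) x = ((T : Equiv.Perm B.PathSpace) ^ m) (T.symm x)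
  rw [zpow_sub_one]
  rfl


theorem cut_aux (hT : B.IsVershik T) {k n : ℕ} :
    ∀ (p : ℕ) (x x' : B.PathSpace), B.KEquivAt k n x x' → B.posN n x = p →
      (∀ i, i < n → B.IsMinEdge ((B.iterZ T (-(p : ℤ)) x).1 i)) ∧
      (∀ i, i < n → B.IsMinEdge ((B.iterZ T (-(p : ℤ)) x').1 i)) := by
  intro p
  induction p with
  | zero =>
      intro x x' h h0
      have h0' : B.posN n x' = 0 := by rw [← B.posN_congr h]; exact h0
      have hz : (-((0 : ℕ) : ℤ)) = 0 := by norm_num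
      rw [hz]
      constructor
      · intro i hi
        rw [B.iterZ_zero T x]
        exact B.allMin_of_posN_zero h0 i hi
      · intro i hi
        rw [B.iterZ_zero T x']
        exact B.allMin_of_posN_zero h0' i hi
  | succ p ih =>
      intro x x' h hp
      have hnm := B.exists_lt_of_posN_ne_zero (n := n) (x := x) (by omega)
      have h' := B.kequivAt_Tsymm T hT h hnm
      have hp' : B.posN n (T.symm x) = p := by
        have := B.posN_pred T hT hnm
        omega
      obtain ⟨h1, h2⟩ := ih (T.symm x) (T.symm x') h' hp'
      have harr : ∀ y : B.PathSpace,
          B.iterZ T (-((p + 1 : ℕ) : ℤ)) y = B.iterZ T (-(p : ℤ)) (T.symm y) := by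
        intro y
        have he : (-((p + 1 : ℕ) : ℤ)) = (-(p : ℤ)) - 1 := by push_cast; ring
        rw [he, B.iterZ_pred]
      constructor
      · intro i hi; rw [harr x]; exact h1 i hi
      · intro i hi; rw [harr x']; exact h2 i hi

theorem iter_forward (hT : B.IsVershik T) {k n : ℕ} :
    ∀ (j : ℕ) (x x' : B.PathSpace), B.KEquivAt k n x x' → j ≤ B.coposN n x →
      B.KEquivAt k n (B.iterZ T (j : ℤ) x) (B.iterZ T (j : ℤ) x') ∧
      B.coposN n x = B.coposN n (B.iterZ T (j : ℤ) x) + j := by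
  intro j
  induction j with
  | zero =>
      intro x x' h hj
      have hz : (((0 : ℕ) : ℤ)) = 0 := by norm_num
      rw [hz]
      refine ⟨?_, ?_⟩
      · rw [B.iterZ_zero T x, B.iterZ_zero T x']
        exact h
      · rw [B.iterZ_zero T x]; omega
  | succ j ih =>
      intro x x' h hj
      have hnm := B.exists_gt_of_coposN_ne_zero (n := n) (x := x) (by omega)
      have h' := B.kequivAt_T T hT h hnm
      have hc := B.coposN_succ T hT hnm
      obtain ⟨h1, h2⟩ := ih (T x) (T x') h' (by omega)
      have harr : ∀ y : B.PathSpace,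
          B.iterZ T ((j + 1 : ℕ) : ℤ) y = B.iterZ T (j : ℤ) (T y) := by
        intro y
        have he : (((j + 1 : ℕ)) : ℤ) = (j : ℤ) + 1 := by push_cast; ring
        rw [he, B.iterZ_succ]
      refine ⟨?_, ?_⟩
      · rw [harr x, harr x']; exact h1
      · rw [harr x]; omega

theorem iter_backward (hT : B.IsVershik T) {k n : ℕ} :
    ∀ (j : ℕ) (x x' : B.PathSpace), B.KEquivAt k n x x' → j ≤ B.posN n x →
      B.KEquivAt k n (B.iterZ T (-(j : ℤ)) x) (B.iterZ T (-(j : ℤ)) x') ∧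
      B.posN n x = B.posN n (B.iterZ T (-(j : ℤ)) x) + j := by
  intro j
  induction j with
  | zero =>
      intro x x' h hj
      have hz : (-((0 : ℕ) : ℤ)) = 0 := by norm_num
      rw [hz]
      refine ⟨?_, ?_⟩
      · rw [B.iterZ_zero T x, B.iterZ_zero T x']
        exact h
      · rw [B.iterZ_zero T x]; omega
  | succ j ih =>
      intro x x' h hj
      have hnm := B.exists_lt_of_posN_ne_zero (n := n) (x := x) (by omega)
      have h' := B.kequivAt_Tsymm T hT h hnm
      have hc := B.posN_pred T hT hnm
      obtain ⟨h1, h2⟩ := ih (T.symm x) (T.symm x') h' (by omega)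
      have harr : ∀ y : B.PathSpace,
          B.iterZ T (-((j + 1 : ℕ) : ℤ)) y = B.iterZ T (-(j : ℤ)) (T.symm y) := by
        intro y
        have he : (-((j + 1 : ℕ) : ℤ)) = (-(j : ℤ)) - 1 := by push_cast; ring
        rw [he, B.iterZ_pred]
      refine ⟨?_, ?_⟩
      · rw [harr x, harr x']; exact h1
      · rw [harr x]; omega

theorem coposN_unbounded (hT : B.IsVershik T) (hproper : B.ProperlyOrdered)
    {k : ℕ} {x x' : B.PathSpace} (hne : x ≠ x') (hK : B.KEquivPaths k x x') (m : ℕ) :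
    ∃ n, k < n ∧ m < B.coposN n x := by
  by_contra hc
  push_neg at hc
  obtain ⟨n₀, hn₀, hstab⟩ :=
    nat_stab (fun n => B.coposN n x) k m (fun n => B.coposN_le_succ n x) hc
  set V := B.coposN n₀ x with hV
  have key : ∀ n, n₀ ≤ n →
      B.KEquivAt k n (B.iterZ T (V : ℤ) x) (B.iterZ T (V : ℤ) x') ∧
      B.coposN n (B.iterZ T (V : ℤ) x) = 0 := by
    intro n hn
    have hkn : k < n := by omega
    have hcop : B.coposN n x = V := hstab n hn
    obtain ⟨h1, h2⟩ := B.iter_forward T hT V x x' (hK.2 n hkn) (le_of_eq hcop.symm)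
    exact ⟨h1, by omega⟩
  have hmaxx : B.IsMaxPath (B.iterZ T (V : ℤ) x) := by
    intro i
    have h := key (max n₀ (i + 1)) (le_max_left _ _)
    have hilt : i < max n₀ (i + 1) := by have := le_max_right n₀ (i + 1); omega
    exact B.allMax_of_coposN_zero h.2 i hilt
  have hmaxx' : B.IsMaxPath (B.iterZ T (V : ℤ) x') := by
    intro i
    have h := key (max n₀ (i + 1)) (le_max_left _ _)
    have hilt : i < max n₀ (i + 1) := by have := le_max_right n₀ (i + 1); omega
    have h0 : B.coposN (max n₀ (i + 1)) (B.iterZ T (V : ℤ) x') = 0 := by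
      rw [← B.coposN_congr h.1]; exact h.2
    exact B.allMax_of_coposN_zero h0 i hilt
  obtain ⟨z, hz1, hz2⟩ := hproper.2
  have e1 := hz2 _ hmaxx
  have e2 := hz2 _ hmaxx'
  exact hne ((B.iterZ T (V : ℤ)).injective (e1.trans e2.symm))

theorem posN_unbounded (hT : B.IsVershik T) (hproper : B.ProperlyOrdered)
    {k : ℕ} {x x' : B.PathSpace} (hne : x ≠ x') (hK : B.KEquivPaths k x x') (m : ℕ) :
    ∃ n, k < n ∧ m < B.posN n x := by
  by_contra hc
  push_neg at hc
  obtain ⟨n₀, hn₀, hstab⟩ :=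
    nat_stab (fun n => B.posN n x) k m (fun n => B.posN_le_succ n x) hc
  set V := B.posN n₀ x with hV
  have key : ∀ n, n₀ ≤ n →
      B.KEquivAt k n (B.iterZ T (-(V : ℤ)) x) (B.iterZ T (-(V : ℤ)) x') ∧
      B.posN n (B.iterZ T (-(V : ℤ)) x) = 0 := by
    intro n hn
    have hkn : k < n := by omega
    have hcop : B.posN n x = V := hstab n hn
    obtain ⟨h1, h2⟩ := B.iter_backward T hT V x x' (hK.2 n hkn) (le_of_eq hcop.symm)
    exact ⟨h1, by omega⟩
  have hminx : B.IsMinPath (B.iterZ T (-(V : ℤ)) x) := by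
    intro i
    have h := key (max n₀ (i + 1)) (le_max_left _ _)
    have hilt : i < max n₀ (i + 1) := by have := le_max_right n₀ (i + 1); omega
    exact B.allMin_of_posN_zero h.2 i hilt
  have hminx' : B.IsMinPath (B.iterZ T (-(V : ℤ)) x') := by
    intro i
    have h := key (max n₀ (i + 1)) (le_max_left _ _)
    have hilt : i < max n₀ (i + 1) := by have := le_max_right n₀ (i + 1); omega
    have h0 : B.posN (max n₀ (i + 1)) (B.iterZ T (-(V : ℤ)) x') = 0 := by
      rw [← B.posN_congr h.1]; exact h.2
    exact B.allMin_of_posN_zero h0 i hilt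
  obtain ⟨z, hz1, hz2⟩ := hproper.1
  have e1 := hz2 _ hminx
  have e2 := hz2 _ hminx'
  exact hne ((B.iterZ T (-(V : ℤ))).injective (e1.trans e2.symm))

theorem agree_of_kequivAt {k n : ℕ} {y y' : B.PathSpace} (h : B.KEquivAt k n y y')
    {i : ℕ} (hik : i < k) (hin : i < n) : y.1 i = y'.1 i := by
  obtain ⟨φ, -, htr, hdot⟩ := h
  have h1 := htr ⟨B.pathInit y n, B.pathInit_endsAt y n⟩ i hik hin
  rw [hdot] at h1
  exact h1.symm

theorem sameCoding_of_kequiv (hT : B.IsVershik T) (hproper : B.ProperlyOrdered)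
    {k : ℕ} {x x' : B.PathSpace} (hne : x ≠ x') (hK : B.KEquivPaths k x x') :
    B.SameCoding T k x x' := by
  intro m i hik
  rcases le_or_gt 0 m with hm | hm
  · lift m to ℕ using hm
    obtain ⟨n, hkn, hlt⟩ := B.coposN_unbounded T hT hproper hne hK m
    obtain ⟨h1, -⟩ := B.iter_forward T hT m x x' (hK.2 n hkn) (le_of_lt hlt)
    exact B.agree_of_kequivAt h1 hik (by omega)
  · obtain ⟨n, hkn, hlt⟩ := B.posN_unbounded T hT hproper hne hK ((-m).toNat)
    obtain ⟨h1, -⟩ := B.iter_backward T hT ((-m).toNat) x x' (hK.2 n hkn) (le_of_lt hlt)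
    have hm' : m = -(((-m).toNat : ℕ) : ℤ) := by omega
    rw [hm']
    exact B.agree_of_kequivAt h1 hik (by omega)

end BDiagram

end Aux

/-- If distinct paths `x, x'` in a simple, properly ordered
Bratteli–Vershik system are `k`-equivalent (`k ≥ 1`), then (a) for every `n > k`
the pair has an `n` cut; (b) the pair is depth `j` for some `j ≥ k`; and
consequently (c) if two distinct `k`-equivalent paths form a depth `n` pair with
`n ≥ k` then they have an `(n+1)` cut. -/
theorem kequiv_cut_and_depth
    (B : BDiagram) (T : B.PathSpace ≃ B.PathSpace)
    (hproper : B.ProperlyOrdered) (hsimple : B.Simple) (hT : B.IsVershik T)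
    (k : ℕ) (hk : 1 ≤ k) :
    (∀ x x' : B.PathSpace, x ≠ x' → B.KEquivPaths k x x' →
      (∀ n : ℕ, k < n → B.HasCut T n x x') ∧
      (∃ j : ℕ, k ≤ j ∧ B.DepthPair T j x x')) ∧
    (∀ x x' : B.PathSpace, x ≠ x' → B.KEquivPaths k x x' →
      ∀ n : ℕ, k ≤ n → B.DepthPair T n x x' → B.HasCut T (n + 1) x x') := by
  classical
  have cut : ∀ x x' : B.PathSpace, B.KEquivPaths k x x' → ∀ n, k < n → B.HasCut T n x x' := by
    intro x x' hK n hn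
    obtain ⟨h1, h2⟩ := B.cut_aux T hT (B.posN n x) x x' (hK.2 n hn) rfl
    exact ⟨-(B.posN n x : ℤ), h1, h2⟩
  constructor
  · intro x x' hne hK
    refine ⟨cut x x' hK, ?_⟩
    have hSC : B.SameCoding T k x x' := B.sameCoding_of_kequiv T hT hproper hne hK
    have hmono : ∀ a b : ℕ, a ≤ b → B.SameCoding T b x x' → B.SameCoding T a x x' :=
      fun a b hab h m i hi => h m i (by omega)
    have hdiff : ∃ i, x.1 i ≠ x'.1 i := by
      by_contra hc
      push_neg at hc
      exact hne (Subtype.ext (funext hc))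
    obtain ⟨i₀, hi₀⟩ := hdiff
    have hnotSC : ¬ B.SameCoding T (i₀ + 1) x x' := by
      intro h
      have h2 := h 0 i₀ (by omega)
      rw [B.iterZ_zero T x, B.iterZ_zero T x'] at h2
      exact hi₀ h2
    set P : ℕ → Prop := fun j => B.SameCoding T j x x' with hPdef
    haveI : DecidablePred P := fun _ => Classical.dec _
    have hkI : k ≤ i₀ + 1 := by
      by_contra hc
      exact hnotSC (hmono (i₀ + 1) k (by omega) hSC)
    set j := Nat.findGreatest P (i₀ + 1) with hj
    have hPj : P j := Nat.findGreatest_spec (P := P) hkI hSC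
    have hkj : k ≤ j := by
      by_contra hc
      exact (Nat.findGreatest_is_greatest (P := P) (n := i₀ + 1) (by omega) hkI) hSC
    have hjle : j ≤ i₀ + 1 := Nat.findGreatest_le (i₀ + 1)
    have hjne : j ≠ i₀ + 1 := fun h => hnotSC (h ▸ hPj)
    have hnot : ¬ P (j + 1) := Nat.findGreatest_is_greatest (P := P) (n := i₀ + 1) (by omega) (by omega)
    exact ⟨j, hkj, hne, hPj, hnot⟩
  · intro x x' hne hK n hn hdp
    exact cut x x' hK (n + 1) (by omega)
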